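/- arXiv:2408.10261 — 6 statements merged into one kernel-verified Lean document; each statement's English description precedes it below -/
import Mathlib

section
/- Let N be a sum-GNN, let D′ ⊆ D be datasets, let v be a vertex of enc(D′), and let v_ℓ and v′_ℓ be the vectors computed for v in layer ℓ when N is applied to enc(D) and enc(D′) respectively. If channel i is safe at layer ℓ, then v′_ℓ[i] ≤ v_ℓ[i]. -/
/-! ## Sum-GNNs, the canonical encoding/decoding and transformation, and Datalog -/

/-- A fact over the GNN signature: a unary fact `U_p(a)` for a channel/unary predicate
`p : Fin δ`, or a binary fact `R^c(a,b)` for a colour/binary predicate `c : Col`.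
Constants are modelled as natural numbers.  A dataset is a (finite) set of facts. -/
inductive GFact (Col : Type) (δ : ℕ) : Type
  | unary (p : Fin δ) (a : ℕ)
  | binary (c : Col) (a b : ℕ)

/-- A sum-GNN with `L ≥ 1` layers over the colour set `Col`: layer `ℓ ∈ {1,…,L}` uses the
matrix `A ℓ` (of dimension `δ ℓ × δ (ℓ-1)`), the matrices `B c ℓ` for each colour `c`,
the bias vector `bias ℓ`, and the monotonically increasing activation function `act ℓ`
with non-negative range; `t` is the threshold of the step classification function
`cls_t`, which outputs `1` on input `x` iff `t ≤ x`.  Dimensions satisfy `δ L = δ 0`. -/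
structure SumGNN (Col : Type) : Type where
  L : ℕ
  hL : 1 ≤ L
  δ : ℕ → ℕ
  hδL : δ L = δ 0
  A : (ℓ : ℕ) → Fin (δ ℓ) → Fin (δ (ℓ - 1)) → ℝ
  B : Col → (ℓ : ℕ) → Fin (δ ℓ) → Fin (δ (ℓ - 1)) → ℝ
  bias : (ℓ : ℕ) → Fin (δ ℓ) → ℝ
  act : ℕ → ℝ → ℝ
  act_mono : ∀ ℓ, Monotone (act ℓ)
  act_nonneg : ∀ ℓ x, 0 ≤ act ℓ x
  t : ℝ

variable {Col : Type} {δ : ℕ}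

open Classical

/-- The constants occurring in a fact. -/
def GFact.constants : GFact Col δ → Set ℕ
  | .unary _ a => {a}
  | .binary _ a b => {a, b}

/-- The constants occurring in a dataset. -/
def constsOf (D : Set (GFact Col δ)) : Set ℕ := ⋃ f ∈ D, f.constants

/-- The real vector labelling the vertex `v_a` of the canonical encoding `enc D` of the
dataset `D` at layer `ℓ` when the sum-GNN `N` is applied to `enc D`:  at layer `0` it is
the Boolean labelling of `enc D` (channel `i` is `1` iff `U_i(a) ∈ D`), and at layer
`ℓ+1` it is `act (ℓ+1) (bias + A ·(previous vector) + Σ_c B^c ·(Σ_{c-neighbours} their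
previous vectors))`, computed componentwise. -/
noncomputable def gnnVal [Fintype Col] (N : SumGNN Col) (D : Set (GFact Col (N.δ 0))) :
    (ℓ : ℕ) → ℕ → Fin (N.δ ℓ) → ℝ
  | 0, a, i => if GFact.unary i a ∈ D then 1 else 0
  | (ℓ + 1), a, i =>
      N.act (ℓ + 1) (N.bias (ℓ + 1) i
        + (∑ j : Fin (N.δ ℓ), N.A (ℓ + 1) i j * gnnVal N D ℓ a j)
        + ∑ c : Col, ∑ j : Fin (N.δ ℓ),
            N.B c (ℓ + 1) i j * ∑ᶠ b ∈ {b : ℕ | GFact.binary c a b ∈ D}, gnnVal N D ℓ b j)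

/-- The canonical dataset transformation `T_N` induced by the sum-GNN `N`:
`T_N(D) = dec(N(enc(D)))`, i.e. it contains the unary fact `U_p(a)` for each constant
`a` of `D` and each channel `p` such that the classification function `cls_t` outputs
`1` on the `p`-th component of the layer-`L` vector of the vertex `v_a`. -/
def TN [Fintype Col] (N : SumGNN Col) (D : Set (GFact Col (N.δ 0))) :
    Set (GFact Col (N.δ 0)) :=
  { f | ∃ a ∈ constsOf D, ∃ p : Fin (N.δ 0),
      f = GFact.unary p a ∧ N.t ≤ gnnVal N D N.L a (Fin.cast N.hδL.symm p) }

/-! ### Datalog -/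

/-- A term: a variable or a constant (both drawn from countably infinite sets). -/
inductive DTerm : Type
  | var (x : ℕ)
  | const (a : ℕ)

/-- An atom over the GNN signature, possibly mentioning variables. -/
inductive DAtom (Col : Type) (δ : ℕ) : Type
  | unary (p : Fin δ) (t : DTerm)
  | binary (c : Col) (t₁ t₂ : DTerm)

/-- A body literal: an atom or an inequality `t₁ ≉ t₂`. -/
inductive DLit (Col : Type) (δ : ℕ) : Type
  | atom (a : DAtom Col δ)
  | neq (t₁ t₂ : DTerm)

/-- Applying a substitution (a map from variables to constants) to a term. -/
def DTerm.subst (ν : ℕ → ℕ) : DTerm → ℕ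
  | .var x => ν x
  | .const a => a

/-- Applying a substitution to an atom, producing a ground atom (a fact). -/
def DAtom.subst (ν : ℕ → ℕ) : DAtom Col δ → GFact Col δ
  | .unary p t => .unary p (t.subst ν)
  | .binary c t₁ t₂ => .binary c (t₁.subst ν) (t₂.subst ν)

/-- The variables of a term. -/
def DTerm.varList : DTerm → List ℕ
  | .var x => [x]
  | .const _ => []

/-- The variables of an atom. -/
def DAtom.varList : DAtom Col δ → List ℕ
  | .unary _ t => t.varList
  | .binary _ t₁ t₂ => t₁.varList ++ t₂.varList

/-- The variables of a literal. -/
def DLit.varList : DLit Col δ → List ℕ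
  | .atom a => a.varList
  | .neq t₁ t₂ => t₁.varList ++ t₂.varList

/-- A Datalog rule `B₁ ∧ … ∧ Bₙ → H`: each inequality in the body mentions two
different terms, and every variable of the rule occurs in some body atom. -/
structure DRule (Col : Type) (δ : ℕ) : Type where
  body : List (DLit Col δ)
  head : DAtom Col δ
  neq_distinct : ∀ t₁ t₂ : DTerm, DLit.neq t₁ t₂ ∈ body → t₁ ≠ t₂
  safe : ∀ x ∈ head.varList ++ body.flatMap DLit.varList,
      ∃ a : DAtom Col δ, DLit.atom a ∈ body ∧ x ∈ a.varList

/-- The variables of a rule, as a finite set. -/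
def DRule.varFinset (r : DRule Col δ) : Finset ℕ :=
  (r.head.varList ++ r.body.flatMap DLit.varList).toFinset

/-- Satisfaction of a ground literal in a dataset: `D ⊨ B` iff `B ∈ D` for a ground atom
`B`, and `D ⊨ a₁ ≉ a₂` iff `a₁ ≠ a₂`. -/
def DLit.sat (D : Set (GFact Col δ)) (ν : ℕ → ℕ) : DLit Col δ → Prop
  | .atom a => a.subst ν ∈ D
  | .neq t₁ t₂ => t₁.subst ν ≠ t₂.subst ν

/-- The immediate consequence operator `T_r` of a rule `r`: `T_r(D)` contains `Hν` for
each substitution `ν` such that `D ⊨ Bᵢν` for every body literal `Bᵢ`. -/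
def Tr (r : DRule Col δ) (D : Set (GFact Col δ)) : Set (GFact Col δ) :=
  { f | ∃ ν : ℕ → ℕ, (∀ B ∈ r.body, B.sat D ν) ∧ f = r.head.subst ν }

/-- The immediate consequence operator of a program: `T_P(D) = ⋃_{r ∈ P} T_r(D)`. -/
def TP (P : List (DRule Col δ)) (D : Set (GFact Col δ)) : Set (GFact Col δ) :=
  ⋃ r ∈ P, Tr r D

/-- The dataset `D_r^ν` consisting of `Bᵢν` for each body atom `Bᵢ` of the rule `r`. -/
def bodyDataset (r : DRule Col δ) (ν : ℕ → ℕ) : Set (GFact Col δ) :=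
  { f | ∃ a : DAtom Col δ, DLit.atom a ∈ r.body ∧ f = a.subst ν }

/-! ### Channel classification -/

/-- `Safe N ℓ i`: channel `i` is safe at layer `ℓ`.  Every channel is safe at layer `0`;
a channel `i` is safe at layer `ℓ+1` if the `i`-th row of `A (ℓ+1)` and of each
`B c (ℓ+1)` contains only non-negative values and the `j`-th entry of each such row is
zero for every `j` unsafe at layer `ℓ`. -/
def Safe (N : SumGNN Col) : (ℓ : ℕ) → Fin (N.δ ℓ) → Prop
  | 0, _ => True
  | (ℓ + 1), i =>
      (∀ j, 0 ≤ N.A (ℓ + 1) i j) ∧ (∀ c : Col, ∀ j, 0 ≤ N.B c (ℓ + 1) i j) ∧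
      (∀ j : Fin (N.δ ℓ), ¬ Safe N ℓ j →
        N.A (ℓ + 1) i j = 0 ∧ ∀ c : Col, N.B c (ℓ + 1) i j = 0)

/-- The classification of channel `i` at layer `ℓ` as a triple of propositions
`(stable, increasing, decreasing)`.  All channels are increasing (and neither stable nor
decreasing) at layer `0`; the classification at layer `ℓ+1` is as in the paper. -/
def chClass (N : SumGNN Col) : (ℓ : ℕ) → Fin (N.δ ℓ) → Prop × Prop × Prop
  | 0, _ => (False, True, False)
  | (ℓ + 1), i =>
      let St : Fin (N.δ ℓ) → Prop := fun j => (chClass N ℓ j).1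
      let Inc : Fin (N.δ ℓ) → Prop := fun j => (chClass N ℓ j).2.1
      let Dec : Fin (N.δ ℓ) → Prop := fun j => (chClass N ℓ j).2.2
      let Und : Fin (N.δ ℓ) → Prop := fun j => ¬ St j ∧ ¬ Inc j ∧ ¬ Dec j
      let stable : Prop :=
        (∀ c : Col, ∀ j, N.B c (ℓ + 1) i j = 0) ∧
        (∀ j, N.A (ℓ + 1) i j ≠ 0 → St j)
      let inc : Prop := ¬ stable ∧ ∀ j,
        (Inc j → 0 ≤ N.A (ℓ + 1) i j) ∧
        (Dec j → N.A (ℓ + 1) i j ≤ 0 ∧ ∀ c : Col, N.B c (ℓ + 1) i j = 0) ∧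
        (Und j → N.A (ℓ + 1) i j = 0 ∧ ∀ c : Col, N.B c (ℓ + 1) i j = 0) ∧
        (∀ c : Col, 0 ≤ N.B c (ℓ + 1) i j)
      let dec : Prop := ¬ stable ∧ ∀ j,
        (Inc j → N.A (ℓ + 1) i j ≤ 0) ∧
        (Dec j → 0 ≤ N.A (ℓ + 1) i j ∧ ∀ c : Col, N.B c (ℓ + 1) i j = 0) ∧
        (Und j → N.A (ℓ + 1) i j = 0 ∧ ∀ c : Col, N.B c (ℓ + 1) i j = 0) ∧
        (∀ c : Col, N.B c (ℓ + 1) i j ≤ 0)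
      (stable, inc, dec)

/-- Channel `i` is stable at layer `ℓ`. -/
def Stable (N : SumGNN Col) (ℓ : ℕ) (i : Fin (N.δ ℓ)) : Prop := (chClass N ℓ i).1

/-- Channel `i` is increasing at layer `ℓ`. -/
def Increasing (N : SumGNN Col) (ℓ : ℕ) (i : Fin (N.δ ℓ)) : Prop := (chClass N ℓ i).2.1

/-- Channel `i` is decreasing at layer `ℓ`. -/
def Decreasing (N : SumGNN Col) (ℓ : ℕ) (i : Fin (N.δ ℓ)) : Prop := (chClass N ℓ i).2.2

/-- Channel `i` is undetermined at layer `ℓ`: neither stable, increasing, nor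
decreasing. -/
def Undetermined (N : SumGNN Col) (ℓ : ℕ) (i : Fin (N.δ ℓ)) : Prop :=
  ¬ Stable N ℓ i ∧ ¬ Increasing N ℓ i ∧ ¬ Decreasing N ℓ i

/-- The sequence `y_ℓ := ReLU (B^{c_ℓ}_ℓ y_{ℓ-1})` (computed componentwise) from the
definition of unbounded channels, for the colour sequence `cs` and initial vector
`y0`. -/
noncomputable def ySeq (N : SumGNN Col) (cs : ℕ → Col) (y0 : Fin (N.δ 0) → ℝ) :
    (ℓ : ℕ) → Fin (N.δ ℓ) → ℝ
  | 0 => y0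
  | (ℓ + 1) => fun i =>
      max (∑ j : Fin (N.δ ℓ), N.B (cs (ℓ + 1)) (ℓ + 1) i j * ySeq N cs y0 ℓ j) 0

/-- Channel `p` is unbounded at layer `L`: there are a Boolean vector `y₀` of dimension
`δ 0` and colours `c₁, …, c_L` such that, with `y_ℓ := ReLU (B^{c_ℓ}_ℓ y_{ℓ-1})` for
`1 ≤ ℓ ≤ L-1`, the `p`-th component of `B^{c_L}_L y_{L-1}` is negative. -/
noncomputable def Unbounded (N : SumGNN Col) (p : Fin (N.δ N.L)) : Prop :=
  ∃ (y0 : Fin (N.δ 0) → ℝ) (cs : ℕ → Col),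
    (∀ k, y0 k = 0 ∨ y0 k = 1) ∧
    (∑ j : Fin (N.δ (N.L - 1)), N.B (cs N.L) N.L p j * ySeq N cs y0 (N.L - 1) j) < 0
lemma gnnVal_nonneg {Col : Type} [Fintype Col] (N : SumGNN Col)
    (D : Set (GFact Col (N.δ 0))) (ℓ : ℕ) (a : ℕ) (i : Fin (N.δ ℓ)) :
    0 ≤ gnnVal N D ℓ a i := by
  cases ℓ with
  | zero => simp only [gnnVal]; split <;> norm_num
  | succ ℓ => exact N.act_nonneg _ _

lemma safe_mono_aux {Col : Type} [Fintype Col] (N : SumGNN Col)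
    (D' D : Set (GFact Col (N.δ 0))) (hD : D.Finite) (hsub : D' ⊆ D) :
    ∀ (ℓ : ℕ) (a : ℕ) (i : Fin (N.δ ℓ)), Safe N ℓ i →
      gnnVal N D' ℓ a i ≤ gnnVal N D ℓ a i := by
  intro ℓ
  induction ℓ with
  | zero =>
    intro a i _
    simp only [gnnVal]
    by_cases h : GFact.unary i a ∈ D'
    · simp [h, hsub h]
    · simp only [h, if_false]
      split <;> norm_num
  | succ ℓ IH =>
    intro a i hsafe
    obtain ⟨hA, hB, hz⟩ := hsafe
    simp only [gnnVal]
    apply N.act_mono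
    refine add_le_add (add_le_add le_rfl ?_) ?_
    · refine Finset.sum_le_sum fun j _ => ?_
      by_cases hj : Safe N ℓ j
      · exact mul_le_mul_of_nonneg_left (IH a j hj) (hA j)
      · rw [(hz j hj).1]; simp
    · refine Finset.sum_le_sum fun c _ => Finset.sum_le_sum fun j _ => ?_
      by_cases hj : Safe N ℓ j
      · refine mul_le_mul_of_nonneg_left ?_ (hB c j)
        have hF : {b : ℕ | GFact.binary c a b ∈ D}.Finite := by
          have : {b : ℕ | GFact.binary c a b ∈ D} =
              (fun b => GFact.binary c a b) ⁻¹' D := rfl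
          rw [this]
          exact hD.preimage (fun x _ y _ h => by
            simpa using (GFact.binary.injEq c a x c a y).mp h)
        have hF' : {b : ℕ | GFact.binary c a b ∈ D'}.Finite :=
          hF.subset fun b hb => hsub hb
        calc (∑ᶠ b ∈ {b : ℕ | GFact.binary c a b ∈ D'}, gnnVal N D' ℓ b j)
            = ∑ b ∈ hF'.toFinset, gnnVal N D' ℓ b j := by
              rw [← finsum_mem_coe_finset, hF'.coe_toFinset]
          _ ≤ ∑ b ∈ hF'.toFinset, gnnVal N D ℓ b j :=
              Finset.sum_le_sum fun b _ => IH b j hj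
          _ ≤ ∑ b ∈ hF.toFinset, gnnVal N D ℓ b j := by
              refine Finset.sum_le_sum_of_subset_of_nonneg ?_
                (fun b _ _ => gnnVal_nonneg N D ℓ b j)
              exact Set.Finite.toFinset_subset_toFinset.mpr fun b hb => hsub hb
          _ = ∑ᶠ b ∈ {b : ℕ | GFact.binary c a b ∈ D}, gnnVal N D ℓ b j := by
              rw [← finsum_mem_coe_finset, hF.coe_toFinset]
      · rw [(hz j hj).2 c]; simp

/-- Let `D' ⊆ D` be datasets, let `v_a` be a vertex of `enc D'`, and
let `v_ℓ` and `v'_ℓ` be the vectors computed for `v_a` in layer `ℓ` when `N` is applied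
to `enc D` and `enc D'` respectively.  If channel `i` is safe at layer `ℓ`, then
`v'_ℓ[i] ≤ v_ℓ[i]`. -/
theorem safe_monotonic {Col : Type} [Fintype Col] (N : SumGNN Col)
    (D' D : Set (GFact Col (N.δ 0))) (hD' : D'.Finite) (hD : D.Finite) (hsub : D' ⊆ D)
    (a : ℕ) (ha : a ∈ constsOf D') (ℓ : ℕ) (hℓ : ℓ ≤ N.L)
    (i : Fin (N.δ ℓ)) (hsafe : Safe N ℓ i) :
    gnnVal N D' ℓ a i ≤ gnnVal N D ℓ a i := by
  exact safe_mono_aux N D' D hD hsub ℓ a i hsafe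
end

section
/- Let N be a sum-GNN with L layers. For every layer ℓ ∈ {0,…,L} and every channel i ∈ {1,…,δ_ℓ}, if channel i is safe at layer ℓ then it is increasing or stable at layer ℓ. -/
variable {Col : Type} {δ : ℕ}

open Classical

theorem safe_key {Col : Type} (N : SumGNN Col) :
    ∀ ℓ (i : Fin (N.δ ℓ)), Safe N ℓ i →
      (Increasing N ℓ i ∨ Stable N ℓ i) ∧ ¬ Decreasing N ℓ i := by
  intro ℓ
  induction ℓ with
  | zero =>
    intro i _
    exact ⟨Or.inl trivial, fun h => h⟩
  | succ ℓ ih =>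
    intro i hs
    obtain ⟨hA, hB, hU⟩ := hs
    have hdefS : Stable N (ℓ+1) i ↔
        ((∀ c : Col, ∀ j, N.B c (ℓ+1) i j = 0) ∧
         ∀ j, N.A (ℓ+1) i j ≠ 0 → Stable N ℓ j) := Iff.rfl
    have hdefI : Increasing N (ℓ+1) i ↔
        (¬ ((∀ c : Col, ∀ j, N.B c (ℓ+1) i j = 0) ∧
            ∀ j, N.A (ℓ+1) i j ≠ 0 → Stable N ℓ j) ∧
         ∀ j, (Increasing N ℓ j → 0 ≤ N.A (ℓ+1) i j) ∧
           (Decreasing N ℓ j → N.A (ℓ+1) i j ≤ 0 ∧ ∀ c : Col, N.B c (ℓ+1) i j = 0) ∧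
           (Undetermined N ℓ j → N.A (ℓ+1) i j = 0 ∧ ∀ c : Col, N.B c (ℓ+1) i j = 0) ∧
           (∀ c : Col, 0 ≤ N.B c (ℓ+1) i j)) := Iff.rfl
    have hdefD : Decreasing N (ℓ+1) i ↔
        (¬ ((∀ c : Col, ∀ j, N.B c (ℓ+1) i j = 0) ∧
            ∀ j, N.A (ℓ+1) i j ≠ 0 → Stable N ℓ j) ∧
         ∀ j, (Increasing N ℓ j → N.A (ℓ+1) i j ≤ 0) ∧
           (Decreasing N ℓ j → 0 ≤ N.A (ℓ+1) i j ∧ ∀ c : Col, N.B c (ℓ+1) i j = 0) ∧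
           (Undetermined N ℓ j → N.A (ℓ+1) i j = 0 ∧ ∀ c : Col, N.B c (ℓ+1) i j = 0) ∧
           (∀ c : Col, N.B c (ℓ+1) i j ≤ 0)) := Iff.rfl
    constructor
    · by_cases hst : Stable N (ℓ+1) i
      · exact Or.inr hst
      · left
        rw [hdefI]
        refine ⟨fun h => hst (hdefS.mpr h), fun j =>
          ⟨fun _ => hA j, ?_, ?_, fun c => hB c j⟩⟩
        · intro hdec
          by_cases hsj : Safe N ℓ j
          · exact absurd hdec (ih j hsj).2
          · obtain ⟨h1, h2⟩ := hU j hsj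
            exact ⟨le_of_eq h1, h2⟩
        · intro hund
          by_cases hsj : Safe N ℓ j
          · rcases (ih j hsj).1 with h | h
            · exact absurd h hund.2.1
            · exact absurd h hund.1
          · exact hU j hsj
    · intro hdec
      rw [hdefD] at hdec
      obtain ⟨hns, hcond⟩ := hdec
      apply hns
      have hBz : ∀ c : Col, ∀ j, N.B c (ℓ+1) i j = 0 := fun c j =>
        le_antisymm ((hcond j).2.2.2 c) (hB c j)
      refine ⟨hBz, fun j hAj => ?_⟩
      by_cases hsj : Safe N ℓ j
      · rcases (ih j hsj).1 with h | h
        · exact absurd (le_antisymm ((hcond j).1 h) (hA j)) hAj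
        · exact h
      · exact absurd (hU j hsj).1 hAj

/-- For every layer `ℓ ∈ {0,…,L}` and every channel `i`, if `i` is
safe at layer `ℓ` then it is increasing or stable at layer `ℓ`. -/
theorem safe_imp_increasing_or_stable {Col : Type} (N : SumGNN Col)
    (ℓ : ℕ) (hℓ : ℓ ≤ N.L) (i : Fin (N.δ ℓ)) (hsafe : Safe N ℓ i) :
    Increasing N ℓ i ∨ Stable N ℓ i := by
  exact (safe_key N ℓ i hsafe).1
end

section
/- There exists a sum-GNN N (for instance with 2 layers, δ₀ = δ₁ = δ₂ = 2, and a single colour) and a channel i at its last layer L such that i is increasing at layer L but unsafe at layer L. -/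
variable {Col : Type} {δ : ℕ}

open Classical

/-- There exists a sum-GNN `N` (with 2 layers, `δ₀ = δ₁ = δ₂ = 2`,
and a single colour) and a channel `i` at its last layer `L` such that `i` is
increasing at layer `L` but unsafe at layer `L`. -/
theorem exists_increasing_unsafe :
    ∃ N : SumGNN Unit, N.L = 2 ∧ N.δ 0 = 2 ∧ N.δ 1 = 2 ∧ N.δ 2 = 2 ∧
      ∃ i : Fin (N.δ N.L), Increasing N N.L i ∧ ¬ Safe N N.L i := by
  refine ⟨{ L := 2, hL := one_le_two, δ := fun _ => 2, hδL := rfl,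
            A := fun _ _ _ => -1, B := fun _ _ _ _ => 0,
            bias := fun _ _ => 0, act := fun _ _ => 0,
            act_mono := fun _ => monotone_const,
            act_nonneg := fun _ _ => le_refl 0, t := 0 }, rfl, rfl, rfl, rfl, 0, ?_, ?_⟩
  · -- Increasing at layer 2
    show (chClass _ 2 0).2.1
    simp only [chClass]
    norm_num
  · -- not Safe at layer 2
    show ¬ Safe _ (1 + 1) 0
    simp only [Safe]
    rintro ⟨h, -, -⟩
    have := h 0
    norm_num at this
end

section
/- Let N be a sum-GNN with L layers in which σ_ℓ is ReLU for each 1 ≤ ℓ ≤ L−1 and the co-domain of σ_L contains a number strictly less than the threshold t of the classification function cls_t. If channel p is unbounded at layer L, then every Datalog rule whose head atom mentions the unary predicate U_p is unsound for N; that is, for every such rule r there exists a dataset D with T_r(D) ⊄ T_N(D). -/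
variable {Col : Type} {δ : ℕ}

open Classical

/-!
Substituting fresh constants for the variables of the rule turns its body into a dataset `D₀`
in which every inequality holds and from which the rule derives `U_p(a)`, `a` the head
constant. Above `a` we attach a tower: levels `1, …, L` of `n` fresh vertices each, all
`c_{L-d}`-edges from level `d` to level `d + 1` (level `0` being `a`), and the leaves labelled
by `y₀`. Since a vertex sums over `n` copies of the level below it, at layer `ℓ < L` the
vertices of level `L - ℓ` carry `n^ℓ y_ℓ + o(n^ℓ)` while every vertex carries `O(n^ℓ)`. So the
pre-activation of channel `p` at `a` in the last layer is `n^L (B^{c_L}_L y_{L-1})[p] + o(n^L)`,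
which tends to `-∞`; for large `n` it lies below some `x` with `σ_L(x) < t`, and `U_p(a)` is
not in `T_N(D₀ ∪ tower)`.
-/

open Filter Topology

def DTerm.constBound : DTerm → ℕ
  | .var _ => 0
  | .const a => a + 1

def DLit.constBound : DLit Col δ → ℕ
  | .atom _ => 0
  | .neq t₁ t₂ => max t₁.constBound t₂.constBound

theorem DTerm.subst_add_ne {C : ℕ} {t₁ t₂ : DTerm} (h₁ : t₁.constBound ≤ C)
    (h₂ : t₂.constBound ≤ C) (h : t₁ ≠ t₂) : t₁.subst (C + ·) ≠ t₂.subst (C + ·) := by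
  cases t₁ <;> cases t₂ <;> simp_all [DTerm.subst, DTerm.constBound] <;> omega

theorem DRule.exists_subst_neq (r : DRule Col δ) :
    ∃ ν : ℕ → ℕ, ∀ t₁ t₂, DLit.neq t₁ t₂ ∈ r.body → t₁.subst ν ≠ t₂.subst ν := by
  refine ⟨(r.body.toFinset.sup DLit.constBound + ·), fun t₁ t₂ h => ?_⟩
  have hC : (DLit.neq t₁ t₂ : DLit Col δ).constBound ≤ r.body.toFinset.sup DLit.constBound :=
    Finset.le_sup (List.mem_toFinset.2 h)
  exact DTerm.subst_add_ne (le_of_max_le_left hC) (le_of_max_le_right hC) (r.neq_distinct t₁ t₂ h)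

theorem bodyDataset_finite (r : DRule Col δ) (ν : ℕ → ℕ) : (bodyDataset r ν).Finite := by
  refine ((r.body.finite_toSet.preimage fun _ _ _ _ => DLit.atom.inj).image
    (DAtom.subst ν)).subset ?_
  rintro _ ⟨atm, hatm, rfl⟩
  exact ⟨atm, hatm, rfl⟩

theorem subst_head_mem_Tr {r : DRule Col δ} {ν : ℕ → ℕ}
    (hν : ∀ t₁ t₂, DLit.neq t₁ t₂ ∈ r.body → t₁.subst ν ≠ t₂.subst ν)
    {D : Set (GFact Col δ)} (hD : bodyDataset r ν ⊆ D) : r.head.subst ν ∈ Tr r D :=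
  ⟨ν, fun
    | .atom atm, h => hD ⟨atm, h, rfl⟩
    | .neq t₁ t₂, h => hν t₁ t₂ h, rfl⟩

theorem mem_constsOf {D : Set (GFact Col δ)} {f : GFact Col δ} (hf : f ∈ D) {x : ℕ}
    (hx : x ∈ f.constants) : x ∈ constsOf D :=
  Set.mem_biUnion hf hx

theorem exists_gt_constsOf {D : Set (GFact Col δ)} (hD : D.Finite) (a : ℕ) :
    ∃ K, a < K ∧ ∀ x ∈ constsOf D, x < K := by
  have hfin : ∀ f : GFact Col δ, f.constants.Finite := by
    rintro (_ | _) <;> simp [GFact.constants]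
  obtain ⟨M, hM⟩ := ((hD.biUnion fun f _ => hfin f).insert a).bddAbove
  exact ⟨M + 1, Nat.lt_succ_of_le (hM (Set.mem_insert a _)),
    fun x hx => Nat.lt_succ_of_le (hM (Set.mem_insert_of_mem a hx))⟩

def nbrs (D : Set (GFact Col δ)) (c : Col) (u : ℕ) : Set ℕ := {b | GFact.binary c u b ∈ D}

theorem finsum_mem_le_card_mul {α : Type*} {s : Set α} {V : Finset α} (hs : s ⊆ V)
    {f : α → ℝ} (hf0 : ∀ b, 0 ≤ f b) {M : ℝ} (hfM : ∀ b, f b ≤ M) :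
    ∑ᶠ b ∈ s, f b ≤ V.card * M := by
  have hfin : s.Finite := V.finite_toSet.subset hs
  rw [finsum_mem_eq_finite_toFinset_sum _ hfin, ← nsmul_eq_mul]
  calc ∑ b ∈ hfin.toFinset, f b ≤ ∑ b ∈ V, f b :=
        Finset.sum_le_sum_of_subset_of_nonneg (by simpa using hs) fun b _ _ => hf0 b
    _ ≤ V.card • M := Finset.sum_le_card_nsmul _ _ _ fun b _ => hfM b

theorem abs_sum_mul_le {ι : Type*} [Fintype ι] (w v : ι → ℝ) {M : ℝ}
    (hv : ∀ j, 0 ≤ v j ∧ v j ≤ M) : |∑ j, w j * v j| ≤ (∑ j, |w j|) * M := by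
  rw [Finset.sum_mul]
  refine (Finset.abs_sum_le_sum_abs _ _).trans (Finset.sum_le_sum fun j _ => ?_)
  rw [abs_mul, abs_of_nonneg (hv j).1]
  exact mul_le_mul_of_nonneg_left (hv j).2 (abs_nonneg _)

theorem tendsto_natCast_pow_atTop {m : ℕ} (hm : m ≠ 0) :
    Tendsto (fun n : ℕ => (n : ℝ) ^ m) atTop atTop :=
  (tendsto_pow_atTop hm).comp tendsto_natCast_atTop_atTop

theorem tendsto_div_pow_succ_of_le_mul_pow {f : ℕ → ℝ} {C : ℝ} {m : ℕ}
    (hf : ∀ᶠ n in atTop, 0 ≤ f n ∧ f n ≤ C * (n : ℝ) ^ m) :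
    Tendsto (fun n : ℕ => f n / (n : ℝ) ^ (m + 1)) atTop (𝓝 0) := by
  refine tendsto_of_tendsto_of_tendsto_of_le_of_le' tendsto_const_nhds
    (tendsto_const_div_atTop_nhds_zero_nat C) ?_ ?_
  · filter_upwards [hf] with n hn using div_nonneg hn.1 (by positivity)
  · filter_upwards [hf, eventually_gt_atTop 0] with n hn hn0
    have hn0' : (0 : ℝ) < n := by exact_mod_cast hn0
    rw [div_le_div_iff₀ (by positivity) hn0', pow_succ, ← mul_assoc]
    exact mul_le_mul_of_nonneg_right hn.2 hn0'.le

section GNN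

variable [Fintype Col] (N : SumGNN Col)

noncomputable def nbrSum (D : Set (GFact Col (N.δ 0))) (ℓ : ℕ) (c : Col) (u : ℕ)
    (j : Fin (N.δ ℓ)) : ℝ :=
  ∑ᶠ b ∈ nbrs D c u, gnnVal N D ℓ b j

noncomputable def preAct (D : Set (GFact Col (N.δ 0))) (ℓ u : ℕ) (i : Fin (N.δ ℓ)) : ℝ :=
  N.bias ℓ i + (∑ j, N.A ℓ i j * gnnVal N D (ℓ - 1) u j)
    + ∑ c, ∑ j, N.B c ℓ i j * nbrSum N D (ℓ - 1) c u j

noncomputable def SumGNN.layerNorm (ℓ : ℕ) : ℝ :=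
  ∑ i, (|N.bias ℓ i| + (∑ j, |N.A ℓ i j|) + ∑ c, ∑ j, |N.B c ℓ i j|)

theorem SumGNN.layerNorm_nonneg (ℓ : ℕ) : 0 ≤ N.layerNorm ℓ :=
  Finset.sum_nonneg fun _ _ => by positivity

variable (D : Set (GFact Col (N.δ 0)))

theorem gnnVal_eq_act_preAct {ℓ : ℕ} (hℓ : 1 ≤ ℓ) (u : ℕ) (i : Fin (N.δ ℓ)) :
    gnnVal N D ℓ u i = N.act ℓ (preAct N D ℓ u i) := by
  obtain ⟨m, rfl⟩ := Nat.exists_eq_add_of_le' hℓ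
  rfl

theorem gnnVal_nonneg_s9 (ℓ u : ℕ) (i : Fin (N.δ ℓ)) : 0 ≤ gnnVal N D ℓ u i := by
  cases ℓ with
  | zero => unfold gnnVal; split_ifs <;> norm_num
  | succ m => exact N.act_nonneg _ _

theorem gnnVal_zero_le_one (u : ℕ) (i : Fin (N.δ 0)) : gnnVal N D 0 u i ≤ 1 := by
  unfold gnnVal; split_ifs <;> norm_num

theorem nbrSum_nonneg (ℓ : ℕ) (c : Col) (u : ℕ) (j : Fin (N.δ ℓ)) : 0 ≤ nbrSum N D ℓ c u j :=
  finsum_mem_induction (0 ≤ ·) le_rfl (fun _ _ => add_nonneg)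
    fun b _ => gnnVal_nonneg_s9 N D ℓ b j

theorem gnnVal_eq_of_nbrs_eq {u v : ℕ} (hlab : ∀ i, GFact.unary i u ∈ D ↔ GFact.unary i v ∈ D)
    (hnbr : ∀ c, nbrs D c u = nbrs D c v) : ∀ ℓ, gnnVal N D ℓ u = gnnVal N D ℓ v
  | 0 => funext fun i => by simp only [gnnVal, hlab]
  | ℓ + 1 => funext fun i => by
      simp only [nbrs] at hnbr
      simp only [gnnVal, gnnVal_eq_of_nbrs_eq hlab hnbr ℓ, hnbr]

theorem abs_preAct_le {V : Finset ℕ} (hV : ∀ c u, nbrs D c u ⊆ V) {ℓ : ℕ} {M : ℝ}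
    (hM0 : 0 ≤ M) (hM : ∀ u j, gnnVal N D (ℓ - 1) u j ≤ M) (u : ℕ) (i : Fin (N.δ ℓ)) :
    |preAct N D ℓ u i| ≤ N.layerNorm ℓ * (1 + M + V.card * M) := by
  have hself : ∀ j, 0 ≤ gnnVal N D (ℓ - 1) u j ∧ gnnVal N D (ℓ - 1) u j ≤ M :=
    fun j => ⟨gnnVal_nonneg_s9 N D _ u j, hM u j⟩
  have hnbr : ∀ c j, 0 ≤ nbrSum N D (ℓ - 1) c u j ∧ nbrSum N D (ℓ - 1) c u j ≤ V.card * M :=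
    fun c j => ⟨nbrSum_nonneg N D _ c u j, finsum_mem_le_card_mul (hV c u)
      (fun b => gnnVal_nonneg_s9 N D _ b j) (fun b => hM b j)⟩
  have hrow : |N.bias ℓ i| + (∑ j, |N.A ℓ i j|) + ∑ c, ∑ j, |N.B c ℓ i j| ≤ N.layerNorm ℓ :=
    Finset.single_le_sum (f := fun i => |N.bias ℓ i| + (∑ j, |N.A ℓ i j|) + ∑ c, ∑ j, |N.B c ℓ i j|)
      (fun _ _ => by positivity) (Finset.mem_univ i)
  have hA : 0 ≤ ∑ j, |N.A ℓ i j| := by positivity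
  have hB : 0 ≤ ∑ c, ∑ j, |N.B c ℓ i j| := by positivity
  have hVM : 0 ≤ (V.card : ℝ) * M := by positivity
  calc |preAct N D ℓ u i|
      ≤ |N.bias ℓ i| + (∑ j, |N.A ℓ i j|) * M + (∑ c, ∑ j, |N.B c ℓ i j|) * (V.card * M) := by
        refine (abs_add_three _ _ _).trans (add_le_add (add_le_add le_rfl
          (abs_sum_mul_le _ _ hself)) ?_)
        rw [Finset.sum_mul]
        exact (Finset.abs_sum_le_sum_abs _ _).trans
          (Finset.sum_le_sum fun c _ => abs_sum_mul_le _ _ (hnbr c))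
    _ ≤ (|N.bias ℓ i| + (∑ j, |N.A ℓ i j|) + ∑ c, ∑ j, |N.B c ℓ i j|) * (1 + M + V.card * M) := by
        nlinarith [abs_nonneg (N.bias ℓ i), mul_nonneg (abs_nonneg (N.bias ℓ i)) hM0,
          mul_nonneg (abs_nonneg (N.bias ℓ i)) hVM, mul_nonneg hA hVM, mul_nonneg hB hM0]
    _ ≤ N.layerNorm ℓ * (1 + M + V.card * M) := by gcongr

end GNN

section GNNAsymptotics

variable [Fintype Col] (N : SumGNN Col)

theorem exists_gnnVal_le_mul_pow {m : ℕ}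
    (hrelu : ∀ ℓ, 1 ≤ ℓ → ℓ ≤ m → N.act ℓ = fun x => max x 0)
    {D : ℕ → Set (GFact Col (N.δ 0))} {κ : ℕ}
    (hD : ∀ n, 1 ≤ n → ∃ V : Finset ℕ, V.card ≤ κ * n ∧ ∀ c u, nbrs (D n) c u ⊆ V) :
    ∀ ℓ ≤ m, ∃ C : ℝ, 0 ≤ C ∧ ∀ n, 1 ≤ n → ∀ u j, gnnVal N (D n) ℓ u j ≤ C * (n : ℝ) ^ ℓ
  | 0, _ => ⟨1, zero_le_one, fun n _ u j => by simpa using gnnVal_zero_le_one N (D n) u j⟩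
  | ℓ + 1, hℓ => by
    obtain ⟨C, hC0, hC⟩ := exists_gnnVal_le_mul_pow hrelu hD ℓ (by omega)
    have hW := N.layerNorm_nonneg (ℓ + 1)
    refine ⟨N.layerNorm (ℓ + 1) * (1 + C + κ * C), by positivity, fun n hn u i => ?_⟩
    obtain ⟨V, hVκ, hV⟩ := hD n hn
    have hn1 : (1 : ℝ) ≤ n := by exact_mod_cast hn
    have hVκ' : (V.card : ℝ) ≤ κ * n := by exact_mod_cast hVκ
    have hpow : (n : ℝ) ^ ℓ ≤ (n : ℝ) ^ (ℓ + 1) := pow_le_pow_right₀ hn1 (by omega)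
    have hpow1 : 1 ≤ (n : ℝ) ^ (ℓ + 1) := one_le_pow₀ hn1
    have hCn : 0 ≤ C * (n : ℝ) ^ ℓ := by positivity
    rw [gnnVal_eq_act_preAct N _ (by omega), hrelu _ (by omega) hℓ]
    calc max (preAct N (D n) (ℓ + 1) u i) 0 ≤ |preAct N (D n) (ℓ + 1) u i| :=
          max_le (le_abs_self _) (abs_nonneg _)
      _ ≤ N.layerNorm (ℓ + 1) * (1 + C * n ^ ℓ + V.card * (C * n ^ ℓ)) :=
          abs_preAct_le N (D n) hV (ℓ := ℓ + 1) hCn (hC n hn) u i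
      _ ≤ N.layerNorm (ℓ + 1) * ((1 + C + κ * C) * n ^ (ℓ + 1)) := by
          gcongr
          rw [pow_succ] at hpow1 hpow ⊢
          nlinarith [mul_le_mul_of_nonneg_right hVκ' hCn, mul_le_mul_of_nonneg_left hpow hC0]
      _ = N.layerNorm (ℓ + 1) * (1 + C + κ * C) * n ^ (ℓ + 1) := by ring

theorem tendsto_preAct_div {D : ℕ → Set (GFact Col (N.δ 0))} {s : ℕ → ℝ}
    (hs : Tendsto s atTop atTop) {ℓ : ℕ} (u : ℕ) (i : Fin (N.δ ℓ))
    {z : Col → Fin (N.δ (ℓ - 1)) → ℝ}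
    (hself : ∀ j, Tendsto (fun n => gnnVal N (D n) (ℓ - 1) u j / s n) atTop (𝓝 0))
    (hnbr : ∀ c j, Tendsto (fun n => nbrSum N (D n) (ℓ - 1) c u j / s n) atTop (𝓝 (z c j))) :
    Tendsto (fun n => preAct N (D n) ℓ u i / s n) atTop (𝓝 (∑ c, ∑ j, N.B c ℓ i j * z c j)) := by
  have h := (((tendsto_const_nhds (x := N.bias ℓ i)).div_atTop hs).add
    (tendsto_finsetSum Finset.univ fun j _ => (hself j).const_mul (N.A ℓ i j))).add
    (tendsto_finsetSum Finset.univ fun c _ => tendsto_finsetSum Finset.univ fun j _ =>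
      (hnbr c j).const_mul (N.B c ℓ i j))
  simp only [mul_zero, Finset.sum_const_zero, zero_add] at h
  refine h.congr fun n => ?_
  simp only [preAct, add_div, Finset.sum_div, mul_div_assoc]

end GNNAsymptotics

section Tower

def towerVert (a K d k : ℕ) : ℕ := if d = 0 then a else K + Nat.pair d k

-- Level `0` is the root `a` alone; levels `1, …, L` consist of `n` vertices `≥ K` each.
def tower (L : ℕ) (cs : ℕ → Col) (y0 : Fin δ → ℝ) (a K n : ℕ) : Set (GFact Col δ) :=
  {f | ∃ i, y0 i = 1 ∧ ∃ k < n, f = .unary i (towerVert a K L k)} ∪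
  {f | ∃ d < L, ∃ k < n, ∃ k' < n,
    f = .binary (cs (L - d)) (towerVert a K d k) (towerVert a K (d + 1) k')}

variable {L : ℕ} {cs : ℕ → Col} {y0 : Fin δ → ℝ} {a K n d k : ℕ}

theorem towerVert_zero (a K k : ℕ) : towerVert a K 0 k = a := if_pos rfl

theorem le_towerVert (hd : d ≠ 0) : K ≤ towerVert a K d k := by
  simp [towerVert, hd]

theorem towerVert_eq_towerVert (ha : a < K) {d' k' : ℕ} :
    towerVert a K d k = towerVert a K d' k' ↔ d = d' ∧ (d = 0 ∨ k = k') := by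
  unfold towerVert
  split_ifs <;> simp_all [Nat.pair_eq_pair] <;> omega

theorem unary_mem_tower {i : Fin δ} {v : ℕ} :
    GFact.unary i v ∈ tower L cs y0 a K n ↔ y0 i = 1 ∧ ∃ k < n, v = towerVert a K L k := by
  simp [tower]

theorem binary_mem_tower {c : Col} {u b : ℕ} :
    GFact.binary c u b ∈ (tower L cs y0 a K n : Set (GFact Col δ)) ↔ ∃ d < L, ∃ k < n, ∃ k' < n,
      c = cs (L - d) ∧ u = towerVert a K d k ∧ b = towerVert a K (d + 1) k' := by
  simp [tower]

theorem tower_finite (L : ℕ) (cs : ℕ → Col) (y0 : Fin δ → ℝ) (a K n : ℕ) :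
    (tower L cs y0 a K n).Finite := by
  refine Set.Finite.union (((Set.finite_univ.prod (Set.finite_Iio n)).image
    fun q : Fin δ × ℕ => GFact.unary q.1 (towerVert a K L q.2)).subset ?_)
    ((((Set.finite_Iio L).prod ((Set.finite_Iio n).prod (Set.finite_Iio n))).image
    fun q : ℕ × ℕ × ℕ => (GFact.binary (cs (L - q.1)) (towerVert a K q.1 q.2.1)
      (towerVert a K (q.1 + 1) q.2.2) : GFact Col δ)).subset ?_)
  · rintro _ ⟨i, -, k, hk, rfl⟩
    exact ⟨(i, k), ⟨trivial, hk⟩, rfl⟩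
  · rintro _ ⟨d, hd, k, hk, k', hk', rfl⟩
    exact ⟨(d, k, k'), ⟨hd, hk, hk'⟩, rfl⟩

end Tower

section TowerOverBase

variable {L : ℕ} {cs : ℕ → Col} {y0 : Fin δ → ℝ} {base : Set (GFact Col δ)} {a K n d k : ℕ}

theorem lt_of_unary_mem (hK : ∀ x ∈ constsOf base, x < K) {i : Fin δ} {u : ℕ}
    (h : GFact.unary i u ∈ base) : u < K :=
  hK u (mem_constsOf h (by simp [GFact.constants]))

theorem lt_of_binary_mem (hK : ∀ x ∈ constsOf base, x < K) {c : Col} {u b : ℕ}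
    (h : GFact.binary c u b ∈ base) : u < K ∧ b < K :=
  ⟨hK u (mem_constsOf h (by simp [GFact.constants])),
    hK b (mem_constsOf h (by simp [GFact.constants]))⟩

theorem nbrs_subset_range (hK : ∀ x ∈ constsOf base, x < K) (c : Col) (u : ℕ) :
    nbrs base c u ⊆ Finset.range K := fun _ hb =>
  Finset.mem_range.2 (lt_of_binary_mem hK hb).2

theorem nbrs_towerVert_eq_empty (hK : ∀ x ∈ constsOf base, x < K) (hd : d ≠ 0) (c : Col) :
    nbrs base c (towerVert a K d k) = ∅ :=
  Set.eq_empty_of_forall_notMem fun _ hb => (le_towerVert hd).not_gt (lt_of_binary_mem hK hb).1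

theorem nbrs_union_tower (ha : a < K) (hk : k < n) (c : Col) :
    nbrs (base ∪ tower L cs y0 a K n) c (towerVert a K d k) = nbrs base c (towerVert a K d k) ∪
      {b | d < L ∧ c = cs (L - d) ∧ ∃ k' < n, b = towerVert a K (d + 1) k'} := by
  ext b
  simp only [nbrs, Set.mem_union, Set.mem_ofPred_eq, binary_mem_tower, towerVert_eq_towerVert ha]
  refine or_congr_right ⟨?_, ?_⟩
  · rintro ⟨d', hd', -, -, k', hk', rfl, ⟨rfl, -⟩, rfl⟩
    exact ⟨hd', rfl, k', hk', rfl⟩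
  · rintro ⟨hd, rfl, k', hk', rfl⟩
    exact ⟨d, hd, k, hk, k', hk', rfl, ⟨rfl, Or.inr rfl⟩, rfl⟩

theorem unary_towerVert_mem_iff (ha : a < K) (hK : ∀ x ∈ constsOf base, x < K) (hd : d ≠ 0)
    (hk : k < n) (i : Fin δ) :
    GFact.unary i (towerVert a K d k) ∈ base ∪ tower L cs y0 a K n ↔ y0 i = 1 ∧ d = L := by
  have hbase : GFact.unary i (towerVert a K d k) ∉ base := fun h =>
    (le_towerVert hd).not_gt (lt_of_unary_mem hK h)
  simp only [Set.mem_union, hbase, false_or, unary_mem_tower, towerVert_eq_towerVert ha, hd]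
  exact and_congr_right fun _ => ⟨fun ⟨_, _, h, _⟩ => h, fun h => ⟨k, hk, h, rfl⟩⟩

theorem nbrs_union_tower_subset (hK : ∀ x ∈ constsOf base, x < K) (c : Col) (u : ℕ) :
    nbrs (base ∪ tower L cs y0 a K n) c u ⊆
      ↑(Finset.range K ∪ (Finset.range (L + 1) ×ˢ Finset.range n).image
        fun q => towerVert a K q.1 q.2) := by
  rintro b (hb | hb)
  · exact Finset.mem_union_left _ (nbrs_subset_range hK c u hb)
  · obtain ⟨d, hd, -, -, k', hk', -, -, rfl⟩ := binary_mem_tower.1 hb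
    refine Finset.mem_union_right _ (Finset.mem_image.2 ⟨(d + 1, k'), ?_, rfl⟩)
    simp only [Finset.mem_product, Finset.mem_range]
    omega

end TowerOverBase

section TowerGNN

variable [Fintype Col] (N : SumGNN Col) {cs : ℕ → Col} {y0 : Fin (N.δ 0) → ℝ}
  {base : Set (GFact Col (N.δ 0))} {a K n d k : ℕ}

theorem gnnVal_towerVert_eq (ha : a < K) (hK : ∀ x ∈ constsOf base, x < K) {k' : ℕ}
    (hk : k < n) (hk' : k' < n) (ℓ : ℕ) :
    gnnVal N (base ∪ tower N.L cs y0 a K n) ℓ (towerVert a K d k) =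
      gnnVal N (base ∪ tower N.L cs y0 a K n) ℓ (towerVert a K d k') := by
  rcases eq_or_ne d 0 with rfl | hd
  · rw [towerVert_zero, towerVert_zero]
  refine gnnVal_eq_of_nbrs_eq N _ (fun i => ?_) (fun c => ?_) ℓ
  · rw [unary_towerVert_mem_iff ha hK hd hk, unary_towerVert_mem_iff ha hK hd hk']
  · rw [nbrs_union_tower ha hk, nbrs_union_tower ha hk', nbrs_towerVert_eq_empty hK hd,
      nbrs_towerVert_eq_empty hK hd]

theorem gnnVal_zero_towerVert_leaf (ha : a < K) (hK : ∀ x ∈ constsOf base, x < K)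
    (hy0 : ∀ i, y0 i = 0 ∨ y0 i = 1) (hk : k < n) (i : Fin (N.δ 0)) :
    gnnVal N (base ∪ tower N.L cs y0 a K n) 0 (towerVert a K N.L k) i = y0 i := by
  have hL : N.L ≠ 0 := by have := N.hL; omega
  simp only [gnnVal, unary_towerVert_mem_iff ha hK hL hk, and_true]
  rcases hy0 i with h | h <;> simp [h]

theorem nbrSum_towerVert (ha : a < K) (hK : ∀ x ∈ constsOf base, x < K) (hd : d < N.L)
    (hn : 0 < n) (ℓ : ℕ) (c : Col) (j : Fin (N.δ ℓ)) :
    nbrSum N (base ∪ tower N.L cs y0 a K n) ℓ c (towerVert a K d 0) j =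
      (∑ᶠ b ∈ nbrs base c (towerVert a K d 0), gnnVal N (base ∪ tower N.L cs y0 a K n) ℓ b j) +
        if c = cs (N.L - d) then
          n * gnnVal N (base ∪ tower N.L cs y0 a K n) ℓ (towerVert a K (d + 1) 0) j
        else 0 := by
  rw [nbrSum, nbrs_union_tower ha hn]
  split_ifs with hc
  · have hlevel : {b | d < N.L ∧ c = cs (N.L - d) ∧ ∃ k' < n, b = towerVert a K (d + 1) k'} =
        ↑((Finset.range n).image (towerVert a K (d + 1))) := by
      ext b
      simp [hd, hc, eq_comm]
    have hdisj : Disjoint (nbrs base c (towerVert a K d 0))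
        ↑((Finset.range n).image (towerVert a K (d + 1))) := by
      refine Set.disjoint_left.2 fun b hb hb' => ?_
      obtain ⟨k', -, rfl⟩ := Finset.mem_image.1 hb'
      exact (le_towerVert d.succ_ne_zero).not_gt (lt_of_binary_mem hK hb).2
    rw [hlevel, finsum_mem_union hdisj ((Finset.range K).finite_toSet.subset
      (nbrs_subset_range hK c _)) (Finset.finite_toSet _), finsum_mem_coe_finset,
      Finset.sum_image fun k₁ _ k₂ _ h => ((towerVert_eq_towerVert ha).1 h).2.resolve_left
        d.succ_ne_zero]
    rw [Finset.sum_congr rfl fun k' hk' =>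
      congrFun (gnnVal_towerVert_eq N ha hK (Finset.mem_range.1 hk') hn ℓ) j]
    simp
  · have hlevel : {b | d < N.L ∧ c = cs (N.L - d) ∧ ∃ k' < n, b = towerVert a K (d + 1) k'} = ∅ :=
      Set.eq_empty_of_forall_notMem fun _ hb => hc hb.2.1
    rw [hlevel, Set.union_empty, add_zero]

end TowerGNN

section TowerAsymptotics

variable [Fintype Col] (N : SumGNN Col) (cs : ℕ → Col) {y0 : Fin (N.δ 0) → ℝ}
  {base : Set (GFact Col (N.δ 0))} {a K : ℕ}

theorem exists_gnnVal_tower_le_mul_pow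
    (hrelu : ∀ ℓ : ℕ, 1 ≤ ℓ → ℓ ≤ N.L - 1 → N.act ℓ = fun x => max x 0)
    (hK : ∀ x ∈ constsOf base, x < K) :
    ∀ ℓ ≤ N.L - 1, ∃ C : ℝ, 0 ≤ C ∧ ∀ n, 1 ≤ n → ∀ u j,
      gnnVal N (base ∪ tower N.L cs y0 a K n) ℓ u j ≤ C * (n : ℝ) ^ ℓ :=
  exists_gnnVal_le_mul_pow N hrelu (κ := K + (N.L + 1)) fun n hn =>
    ⟨_, (Finset.card_union_le _ _).trans (by
      grw [Finset.card_image_le]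
      simp only [Finset.card_product, Finset.card_range]
      nlinarith), nbrs_union_tower_subset hK⟩

theorem tendsto_nbrSum_towerVert_div
    (hrelu : ∀ ℓ : ℕ, 1 ≤ ℓ → ℓ ≤ N.L - 1 → N.act ℓ = fun x => max x 0)
    (ha : a < K) (hK : ∀ x ∈ constsOf base, x < K) {m : ℕ} (hm : m + 1 ≤ N.L)
    (ih : ∀ j, Tendsto (fun n : ℕ => gnnVal N (base ∪ tower N.L cs y0 a K n) m
      (towerVert a K (N.L - m) 0) j / (n : ℝ) ^ m) atTop (𝓝 (ySeq N cs y0 m j)))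
    (c : Col) (j : Fin (N.δ m)) :
    Tendsto (fun n : ℕ => nbrSum N (base ∪ tower N.L cs y0 a K n) m c
        (towerVert a K (N.L - (m + 1)) 0) j / (n : ℝ) ^ (m + 1)) atTop
      (𝓝 (if c = cs (m + 1) then ySeq N cs y0 m j else 0)) := by
  obtain ⟨C, -, hC⟩ := exists_gnnVal_tower_le_mul_pow N cs hrelu hK m (by omega)
  have hbase : Tendsto (fun n : ℕ => (∑ᶠ b ∈ nbrs base c (towerVert a K (N.L - (m + 1)) 0),
      gnnVal N (base ∪ tower N.L cs y0 a K n) m b j) / (n : ℝ) ^ (m + 1)) atTop (𝓝 0) := by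
    refine tendsto_div_pow_succ_of_le_mul_pow (C := K * C) ?_
    filter_upwards [eventually_ge_atTop 1] with n hn
    refine ⟨finsum_mem_induction (0 ≤ ·) le_rfl (fun _ _ => add_nonneg)
      fun b _ => gnnVal_nonneg_s9 N _ m b j, ?_⟩
    have := finsum_mem_le_card_mul
      (nbrs_subset_range hK c (towerVert a K (N.L - (m + 1)) 0))
      (fun b => gnnVal_nonneg_s9 N _ m b j) (fun b => hC n hn b j)
    rwa [Finset.card_range, ← mul_assoc] at this
  have htower : Tendsto (fun n : ℕ => (if c = cs (m + 1) then
        n * gnnVal N (base ∪ tower N.L cs y0 a K n) m (towerVert a K (N.L - m) 0) j else 0) /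
          (n : ℝ) ^ (m + 1)) atTop (𝓝 (if c = cs (m + 1) then ySeq N cs y0 m j else 0)) := by
    split_ifs
    · refine (ih j).congr' ?_
      filter_upwards [eventually_gt_atTop 0] with n hn
      have : (n : ℝ) ≠ 0 := by positivity
      field_simp
      ring
    · simp
  have hlim := hbase.add htower
  rw [zero_add] at hlim
  refine hlim.congr' ?_
  filter_upwards [eventually_gt_atTop 0] with n hn
  rw [nbrSum_towerVert N ha hK (by omega) hn, Nat.sub_sub_self hm,
    show N.L - (m + 1) + 1 = N.L - m by omega, add_div]

theorem tendsto_preAct_towerVert_div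
    (hrelu : ∀ ℓ : ℕ, 1 ≤ ℓ → ℓ ≤ N.L - 1 → N.act ℓ = fun x => max x 0)
    (ha : a < K) (hK : ∀ x ∈ constsOf base, x < K) {m : ℕ} (hm : m + 1 ≤ N.L)
    (ih : ∀ j, Tendsto (fun n : ℕ => gnnVal N (base ∪ tower N.L cs y0 a K n) m
      (towerVert a K (N.L - m) 0) j / (n : ℝ) ^ m) atTop (𝓝 (ySeq N cs y0 m j)))
    (i : Fin (N.δ (m + 1))) :
    Tendsto (fun n : ℕ => preAct N (base ∪ tower N.L cs y0 a K n) (m + 1)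
        (towerVert a K (N.L - (m + 1)) 0) i / (n : ℝ) ^ (m + 1)) atTop
      (𝓝 (∑ j, N.B (cs (m + 1)) (m + 1) i j * ySeq N cs y0 m j)) := by
  obtain ⟨C, -, hC⟩ := exists_gnnVal_tower_le_mul_pow N cs hrelu hK m (by omega)
  have hself : ∀ j, Tendsto (fun n : ℕ => gnnVal N (base ∪ tower N.L cs y0 a K n) m
      (towerVert a K (N.L - (m + 1)) 0) j / (n : ℝ) ^ (m + 1)) atTop (𝓝 0) := fun j =>
    tendsto_div_pow_succ_of_le_mul_pow (eventually_atTop.2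
      ⟨1, fun n hn => ⟨gnnVal_nonneg_s9 N _ m _ j, hC n hn _ j⟩⟩)
  have hsum : ∑ c, ∑ j, N.B c (m + 1) i j * (if c = cs (m + 1) then ySeq N cs y0 m j else 0) =
      ∑ j, N.B (cs (m + 1)) (m + 1) i j * ySeq N cs y0 m j := by
    rw [Fintype.sum_eq_single (cs (m + 1)) fun c hc => by simp [hc]]
    simp
  rw [← hsum]
  exact tendsto_preAct_div N (tendsto_natCast_pow_atTop m.succ_ne_zero) _ i hself
    (tendsto_nbrSum_towerVert_div N cs hrelu ha hK hm ih)

theorem tendsto_gnnVal_towerVert_div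
    (hrelu : ∀ ℓ : ℕ, 1 ≤ ℓ → ℓ ≤ N.L - 1 → N.act ℓ = fun x => max x 0)
    (ha : a < K) (hK : ∀ x ∈ constsOf base, x < K) (hy0 : ∀ i, y0 i = 0 ∨ y0 i = 1) :
    ∀ m ≤ N.L - 1, ∀ j, Tendsto (fun n : ℕ => gnnVal N (base ∪ tower N.L cs y0 a K n) m
      (towerVert a K (N.L - m) 0) j / (n : ℝ) ^ m) atTop (𝓝 (ySeq N cs y0 m j))
  | 0, _, j => by
    refine tendsto_const_nhds.congr' ?_
    filter_upwards [eventually_gt_atTop 0] with n hn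
    rw [Nat.sub_zero, gnnVal_zero_towerVert_leaf N ha hK hy0 hn, pow_zero, div_one]
    rfl
  | m + 1, hm, j => by
    have hP := tendsto_preAct_towerVert_div N cs hrelu ha hK (by omega)
      (tendsto_gnnVal_towerVert_div hrelu ha hK hy0 m (by omega)) j
    refine (hP.max tendsto_const_nhds).congr' ?_
    filter_upwards [eventually_gt_atTop 0] with n hn
    rw [gnnVal_eq_act_preAct N _ (by omega), hrelu _ (by omega) hm,
      ← max_div_div_right (by positivity), zero_div]

theorem tendsto_preAct_root_atBot
    (hrelu : ∀ ℓ : ℕ, 1 ≤ ℓ → ℓ ≤ N.L - 1 → N.act ℓ = fun x => max x 0)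
    (ha : a < K) (hK : ∀ x ∈ constsOf base, x < K) (hy0 : ∀ i, y0 i = 0 ∨ y0 i = 1)
    {p : Fin (N.δ N.L)}
    (hneg : ∑ j, N.B (cs N.L) N.L p j * ySeq N cs y0 (N.L - 1) j < 0) :
    Tendsto (fun n => preAct N (base ∪ tower N.L cs y0 a K n) N.L a p) atTop atBot := by
  have hL : N.L ≠ 0 := by have := N.hL; omega
  -- `N.L` is generalized to `ℓ` so that it can be written as `m + 1` despite the index `p`.
  have key : ∀ ℓ, ℓ = N.L → ∀ i : Fin (N.δ ℓ), Tendsto (fun n : ℕ =>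
      preAct N (base ∪ tower N.L cs y0 a K n) ℓ (towerVert a K (N.L - ℓ) 0) i / (n : ℝ) ^ ℓ)
        atTop (𝓝 (∑ j, N.B (cs ℓ) ℓ i j * ySeq N cs y0 (ℓ - 1) j)) := by
    intro ℓ hℓ i
    obtain ⟨m, rfl⟩ : ∃ m, ℓ = m + 1 := ⟨N.L - 1, by omega⟩
    exact tendsto_preAct_towerVert_div N cs hrelu ha hK hℓ.le
      (tendsto_gnnVal_towerVert_div N cs hrelu ha hK hy0 m (by omega)) i
  have hroot := key N.L rfl p
  simp only [Nat.sub_self, towerVert_zero] at hroot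
  refine (hroot.neg_mul_atTop hneg (tendsto_natCast_pow_atTop hL)).congr' ?_
  filter_upwards [eventually_gt_atTop 0] with n hn
  exact div_mul_cancel₀ _ (by positivity)

end TowerAsymptotics

/-- Let `N` be a sum-GNN whose activation functions are ReLU in all
layers `1 ≤ ℓ ≤ L-1` and whose last activation's co-domain contains a number strictly
below the classification threshold `t`.  If channel `p` is unbounded at layer `L`, then
every rule whose head mentions the unary predicate `U_p` is unsound for `N`: there is a
dataset `D` with `T_r(D) ⊄ T_N(D)`. -/
theorem unbounded_unsound {Col : Type} [Fintype Col] (N : SumGNN Col)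
    (hrelu : ∀ ℓ : ℕ, 1 ≤ ℓ → ℓ ≤ N.L - 1 → N.act ℓ = fun x => max x 0)
    (hcod : ∃ x : ℝ, N.act N.L x < N.t)
    (p : Fin (N.δ 0)) (hp : Unbounded N (Fin.cast N.hδL.symm p)) :
    ∀ r : DRule Col (N.δ 0), (∃ tm : DTerm, r.head = DAtom.unary p tm) →
      ∃ D : Set (GFact Col (N.δ 0)), D.Finite ∧ ¬ Tr r D ⊆ TN N D := by
  rintro r ⟨tm, hhead⟩
  obtain ⟨y0, cs, hy0, hneg⟩ := hp
  obtain ⟨x, hx⟩ := hcod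
  obtain ⟨ν, hν⟩ := r.exists_subst_neq
  obtain ⟨K, ha, hK⟩ := exists_gt_constsOf (bodyDataset_finite r ν) (tm.subst ν)
  obtain ⟨n, hn⟩ := ((tendsto_preAct_root_atBot N cs hrelu ha hK hy0 hneg).eventually
    (eventually_le_atBot x)).exists
  set D := bodyDataset r ν ∪ tower N.L cs y0 (tm.subst ν) K n
  refine ⟨D, (bodyDataset_finite r ν).union (tower_finite _ _ _ _ _ _), fun hsub => ?_⟩
  have hhead_mem := subst_head_mem_Tr hν (D := D) Set.subset_union_left
  rw [hhead] at hhead_mem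
  obtain ⟨_, -, _, hf, hle⟩ := hsub hhead_mem
  obtain ⟨rfl, rfl⟩ := GFact.unary.inj hf
  rw [gnnVal_eq_act_preAct N D N.hL] at hle
  exact ((N.act_mono N.L hn).trans_lt hx).not_ge hle
end

section
/- Let N be a sum-GNN with L layers. If channel p ∈ {1,…,δ_L} is unbounded at layer L, then p is not increasing at layer L, not stable at layer L, and not safe at layer L. -/
variable {Col : Type} {δ : ℕ}

open Classical

lemma ySeq_nonneg {Col : Type} (N : SumGNN Col) (cs : ℕ → Col) (y0 : Fin (N.δ 0) → ℝ)
    (hy0 : ∀ k, y0 k = 0 ∨ y0 k = 1) : ∀ ℓ j, 0 ≤ ySeq N cs y0 ℓ j := by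
  intro ℓ
  induction ℓ with
  | zero => intro j; rcases hy0 j with h | h <;> simp [ySeq, h]
  | succ m ih => intro j; exact le_max_right _ _

lemma key_neg {Col : Type} (N : SumGNN Col) (ℓ : ℕ) (hℓ : 1 ≤ ℓ) (i : Fin (N.δ ℓ))
    (c : Col) (j : Fin (N.δ (ℓ - 1))) (hneg : N.B c ℓ i j < 0) :
    ¬ Increasing N ℓ i ∧ ¬ Stable N ℓ i ∧ ¬ Safe N ℓ i := by
  cases ℓ with
  | zero => omega
  | succ m =>
    refine ⟨?_, ?_, ?_⟩
    · intro h
      simp only [Increasing, chClass] at h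
      exact absurd ((h.2 j).2.2.2 c) (not_le.mpr hneg)
    · intro h
      simp only [Stable, chClass] at h
      exact absurd (h.1 c j) (ne_of_lt hneg)
    · intro h
      exact absurd (h.2.1 c j) (not_le.mpr hneg)

/-- If channel `p` is unbounded at layer `L`, then `p` is not
increasing, not stable, and not safe at layer `L`. -/
theorem unbounded_not_increasing_stable_safe {Col : Type} (N : SumGNN Col)
    (p : Fin (N.δ N.L)) (hp : Unbounded N p) :
    ¬ Increasing N N.L p ∧ ¬ Stable N N.L p ∧ ¬ Safe N N.L p := by
  obtain ⟨y0, cs, hy0, hsum⟩ := hp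
  have hex : ∃ j : Fin (N.δ (N.L - 1)), N.B (cs N.L) N.L p j < 0 := by
    by_contra h
    push_neg at h
    exact absurd (Finset.sum_nonneg fun j _ =>
      mul_nonneg (h j) (ySeq_nonneg N cs y0 hy0 _ j)) (not_le.mpr hsum)
  obtain ⟨j, hj⟩ := hex
  exact key_neg N N.L N.hL p (cs N.L) j hj
end

section
/- There exists a sum-GNN N (for instance with 2 layers, δ₀ = δ₁ = δ₂ = 2, and a single colour) and a channel p at its last layer L such that p is unbounded at layer L and undetermined at layer L. -/
variable {Col : Type} {δ : ℕ}

open Classical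

noncomputable def myN : SumGNN Unit where
  L := 2
  hL := one_le_two
  δ := fun _ => 2
  hδL := rfl
  A := fun _ _ _ => 0
  B := fun _ ℓ i j => if ℓ = 2 then (if (j : ℕ) = 0 then -1 else 1)
                      else (if (i : ℕ) = (j : ℕ) then 1 else 0)
  bias := fun _ _ => 0
  act := fun _ x => max x 0
  act_mono := fun _ a b h => max_le_max h le_rfl
  act_nonneg := fun _ x => le_max_right _ _
  t := 0

/-- There exists a sum-GNN `N` (with 2 layers, `δ₀ = δ₁ = δ₂ = 2`,
and a single colour) and a channel `p` at its last layer `L` that is unbounded at layer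
`L` and undetermined at layer `L`. -/
theorem exists_unbounded_undetermined :
    ∃ N : SumGNN Unit, N.L = 2 ∧ N.δ 0 = 2 ∧ N.δ 1 = 2 ∧ N.δ 2 = 2 ∧
      ∃ p : Fin (N.δ N.L), Unbounded N p ∧ Undetermined N N.L p := by
  refine ⟨myN, rfl, rfl, rfl, rfl, ⟨⟨0, Nat.zero_lt_two⟩, ?_, ?_⟩⟩
  · -- Unbounded
    refine ⟨fun k => if (k : ℕ) = 0 then 1 else 0, fun _ => (), fun k => ?_, ?_⟩
    · by_cases h : (k : ℕ) = 0 <;> simp [h]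
    · have hB1 : ∀ i j : Fin 2, myN.B () 1 i j = if (i : ℕ) = (j : ℕ) then 1 else 0 :=
        fun _ _ => rfl
      have hB2 : ∀ i j : Fin 2, myN.B () 2 i j = if (j : ℕ) = 0 then -1 else 1 :=
        fun _ _ => rfl
      have hy : ∀ j : Fin 2, ySeq myN (fun _ => ())
          (fun k => if (k : ℕ) = 0 then 1 else 0) 1 j = if (j : ℕ) = 0 then 1 else 0 := by
        intro j
        show max (∑ k : Fin 2, myN.B () 1 j k *
            (if (k : ℕ) = 0 then (1:ℝ) else 0)) 0 = _
        fin_cases j <;> simp [Fin.sum_univ_two, hB1]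
      show (∑ j : Fin 2, myN.B () 2 (⟨0, Nat.zero_lt_two⟩ : Fin 2) j *
          ySeq myN (fun _ => ()) (fun k => if (k : ℕ) = 0 then 1 else 0) 1 j) < 0
      rw [Fin.sum_univ_two, hy, hy, hB2, hB2]
      norm_num
  · -- Undetermined
    refine ⟨?_, ?_, ?_⟩
    · intro h
      have : (-1 : ℝ) = 0 := h.1 () ⟨0, Nat.zero_lt_two⟩
      norm_num at this
    · intro h
      have : (0 : ℝ) ≤ -1 := (h.2 ⟨0, Nat.zero_lt_two⟩).2.2.2 ()
      norm_num at this
    · intro h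
      have : (1 : ℝ) ≤ 0 := (h.2 ⟨1, Nat.one_lt_two⟩).2.2.2 ()
      norm_num at this
end
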